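/- A three-level PT-net system (N,M0) with T = L ∪ D ∪ H has the property BINI if and only if Q(h,l) holds for every high-level transition h ∈ H and every low-level transition l ∈ L. -/

import Mathlib

/-! ## Labelled transition systems -/

structure LTS (Q : Type _) (A : Type _) where
  init : Q
  tr : Q → A → Q → Prop

namespace LTS

variable {Q Q' A : Type _}

/-- One unobservable step. -/
def TauStep (S : LTS Q A) (Obs : Set A) (q q' : Q) : Prop :=
  ∃ τ, τ ∉ Obs ∧ S.tr q τ q'

/-- `q →* q'` : reflexive-transitive closure of unobservable steps. -/
def TauStar (S : LTS Q A) (Obs : Set A) : Q → Q → Prop :=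
  Relation.ReflTransGen (S.TauStep Obs)

/-- Weak steps producing a word of observable labels. -/
inductive WeakSteps (S : LTS Q A) (Obs : Set A) : Q → List A → Q → Prop
  | nil (q : Q) : WeakSteps S Obs q [] q
  | tau {q q' q'' : Q} {w : List A} {τ : A} :
      τ ∉ Obs → S.tr q τ q' → WeakSteps S Obs q' w q'' → WeakSteps S Obs q w q''
  | obs {q q' q'' : Q} {w : List A} {σ : A} :
      σ ∈ Obs → S.tr q σ q' → WeakSteps S Obs q' w q'' → WeakSteps S Obs q (σ :: w) q''

/-- The language of a partially observed LTS. -/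
def lang (S : LTS Q A) (Obs : Set A) : Set (List A) :=
  { w | ∃ q, S.WeakSteps Obs S.init w q }

end LTS

/-- `R` is a weak simulation of `S` by `S'`. -/
def IsWeakSimulation {Q Q' A : Type _} (Obs : Set A) (S : LTS Q A) (S' : LTS Q' A)
    (R : Q → Q' → Prop) : Prop :=
  R S.init S'.init ∧
  ∀ q1 q1', R q1 q1' →
    (∀ σ ∈ Obs, ∀ q2, S.tr q1 σ q2 →
      ∃ q1'' q2'' q2', S'.TauStar Obs q1' q1'' ∧ S'.tr q1'' σ q2'' ∧
        S'.TauStar Obs q2'' q2' ∧ R q2 q2') ∧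
    (∀ τ ∉ Obs, ∀ q2, S.tr q1 τ q2 →
      ∃ q2', S'.TauStar Obs q1' q2' ∧ R q2 q2')

/-- `S` is weakly simulated by `S'`. -/
def WeaklySimulated {Q Q' A : Type _} (Obs : Set A) (S : LTS Q A) (S' : LTS Q' A) : Prop :=
  ∃ R, IsWeakSimulation Obs S S' R

/-- `R` is a weak bisimulation between `S` and `S'`. -/
def IsWeakBisimulation {Q Q' A : Type _} (Obs : Set A) (S : LTS Q A) (S' : LTS Q' A)
    (R : Q → Q' → Prop) : Prop :=
  IsWeakSimulation Obs S S' R ∧ IsWeakSimulation Obs S' S (fun q' q => R q q')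

/-- `S` and `S'` are weakly bisimilar. -/
def WeaklyBisimilar {Q Q' A : Type _} (Obs : Set A) (S : LTS Q A) (S' : LTS Q' A) : Prop :=
  ∃ R, IsWeakBisimulation Obs S S' R

/-! ## Place/Transition Petri nets -/

/-- A PT-net over a universe `P` of places and `Tr` of transitions:
a finite set of places, a finite set of transitions, and input/output flows.
Flows of non-transitions vanish. -/
structure PTNet (P : Type _) (Tr : Type _) where
  places : Finset P
  transitions : Finset Tr
  pre : Tr → P → ℕ
  post : Tr → P → ℕ
  pre_eq_zero : ∀ t ∉ transitions, ∀ p, pre t p = 0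
  post_eq_zero : ∀ t ∉ transitions, ∀ p, post t p = 0

namespace PTNet

variable {P Tr : Type _} [DecidableEq P] [DecidableEq Tr]

/-- `M[t⟩` : transition `t` is enabled at marking `M`. -/
def Enabled (N : PTNet P Tr) (M : P → ℕ) (t : Tr) : Prop :=
  t ∈ N.transitions ∧ ∀ p ∈ N.places, N.pre t p ≤ M p

/-- The marking obtained by firing `t` at `M`. -/
def fire (N : PTNet P Tr) (M : P → ℕ) (t : Tr) : P → ℕ :=
  fun p => if p ∈ N.places then M p + N.post t p - N.pre t p else M p

/-- `M[t⟩M'`. -/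
def Fires (N : PTNet P Tr) (M : P → ℕ) (t : Tr) (M' : P → ℕ) : Prop :=
  N.Enabled M t ∧ M' = N.fire M t

/-- `M[s⟩M'` for a sequence `s` of transitions. -/
def FiresSeq (N : PTNet P Tr) : (P → ℕ) → List Tr → (P → ℕ) → Prop
  | M, [], M' => M' = M
  | M, t :: s, M' => ∃ M'', N.Fires M t M'' ∧ N.FiresSeq M'' s M'

/-- `M'` is reachable from `M`. -/
def Reachable (N : PTNet P Tr) (M M' : P → ℕ) : Prop :=
  ∃ s, N.FiresSeq M s M'

/-- The restriction `N \ T'` of a net: the transitions in `T'` are removed. -/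
def restrict (N : PTNet P Tr) (T' : Finset Tr) : PTNet P Tr where
  places := N.places
  transitions := N.transitions \ T'
  pre := fun t p => if t ∈ N.transitions \ T' then N.pre t p else 0
  post := fun t p => if t ∈ N.transitions \ T' then N.post t p else 0
  pre_eq_zero := by intro t ht p; simp [ht]
  post_eq_zero := by intro t ht p; simp [ht]

/-- The composition `N1 | N2` of two nets (intended for disjoint place sets);
shared transitions synchronize. -/
def comp (N1 N2 : PTNet P Tr) : PTNet P Tr where
  places := N1.places ∪ N2.places
  transitions := N1.transitions ∪ N2.transitions
  pre := fun t p => if p ∈ N1.places then N1.pre t p else N2.pre t p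
  post := fun t p => if p ∈ N1.places then N1.post t p else N2.post t p
  pre_eq_zero := by
    intro t ht p
    simp only [Finset.mem_union, not_or] at ht
    by_cases hp : p ∈ N1.places <;>
      simp [hp, N1.pre_eq_zero t ht.1, N2.pre_eq_zero t ht.2]
  post_eq_zero := by
    intro t ht p
    simp only [Finset.mem_union, not_or] at ht
    by_cases hp : p ∈ N1.places <;>
      simp [hp, N1.post_eq_zero t ht.1, N2.post_eq_zero t ht.2]

/-- The union of two initial markings (agrees with `M1` on the places of `N1`,
with `M2` elsewhere). -/
def combine (N1 : PTNet P Tr) (M1 M2 : P → ℕ) : P → ℕ :=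
  fun p => if p ∈ N1.places then M1 p else M2 p

/-- The reachability graph of a marked net, as an LTS on markings. -/
def toLTS (N : PTNet P Tr) (M0 : P → ℕ) : LTS (P → ℕ) Tr where
  init := M0
  tr := fun M t M' => N.Fires M t M'

/-- The language of the net system `(N, M0)` whose observable transitions are
those in `L` (labelled by themselves): projections of firing sequences onto `L*`. -/
def lang (N : PTNet P Tr) (M0 : P → ℕ) (L : Finset Tr) : Set (List Tr) :=
  { w | ∃ s M, N.FiresSeq M0 s M ∧ s.filter (· ∈ L) = w }

/-- The free language of the net system `(N, M0)`: all of its firing sequences. -/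
def freeLang (N : PTNet P Tr) (M0 : P → ℕ) : Set (List Tr) :=
  { s | ∃ M, N.FiresSeq M0 s M }

/-- The net with given places and transitions and empty flow. -/
def ofSets (Pl : Finset P) (Ts : Finset Tr) : PTNet P Tr where
  places := Pl
  transitions := Ts
  pre := fun _ _ => 0
  post := fun _ _ => 0
  pre_eq_zero := fun _ _ _ => rfl
  post_eq_zero := fun _ _ _ => rfl

end PTNet

/-! ## Non-interference properties -/

section Security

variable {P Tr : Type _} [DecidableEq P] [DecidableEq Tr]

/-- Non-Deducibility on Compositions: for every high-level net system `N'`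
(with any initial marking `M0'`) whose places are disjoint from those of `N` and
whose transitions avoid `L`, the systems `N \ H` and `(N | N') \ (H \ H')` are
language equivalent, the observable transitions being those in `L`. -/
def NDC (N : PTNet P Tr) (M0 : P → ℕ) (L H : Finset Tr) : Prop :=
  ∀ (N' : PTNet P Tr) (M0' : P → ℕ),
    Disjoint N.places N'.places → Disjoint N'.transitions L →
    (N.restrict H).lang M0 L =
      ((N.comp N').restrict (H \ N'.transitions)).lang (N.combine M0 M0') L

/-- Bisimulation-based Non-Deducibility on Compositions: as `NDC`, but with
weak bisimilarity in place of language equivalence. -/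
def BNDC (N : PTNet P Tr) (M0 : P → ℕ) (L H : Finset Tr) : Prop :=
  ∀ (N' : PTNet P Tr) (M0' : P → ℕ),
    Disjoint N.places N'.places → Disjoint N'.transitions L →
    WeaklyBisimilar (L : Set Tr) ((N.restrict H).toLTS M0)
      (((N.comp N').restrict (H \ N'.transitions)).toLTS (N.combine M0 M0'))

/-- Strong BNDC: whenever a reachable marking `M1` enables a high transition `h`
with `M1[h⟩M2`, the systems `(N \ H, M1)` and `(N \ H, M2)` are weakly bisimilar. -/
def SBNDC (N : PTNet P Tr) (M0 : P → ℕ) (L H : Finset Tr) : Prop :=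
  ∀ M1 h M2, N.Reachable M0 M1 → h ∈ H → N.Fires M1 h M2 →
    WeaklyBisimilar (L : Set Tr) ((N.restrict H).toLTS M1) ((N.restrict H).toLTS M2)

/-- The least relation generated from `M0 R M0` by:
(i) if `M1 R M2` and `M2[h⟩M2'` with `h ∈ H` then `M1 R M2'`;
(ii) if `M1 R M2`, `M1[l⟩M1'` (in `N \ H`) and `M2[l⟩M2'` with `l ∈ L`
then `M1' R M2'`. -/
inductive RRel (N : PTNet P Tr) (M0 : P → ℕ) (L H : Finset Tr) : (P → ℕ) → (P → ℕ) → Prop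
  | base : RRel N M0 L H M0 M0
  | high {M1 M2 M2' : P → ℕ} {h : Tr} : h ∈ H → RRel N M0 L H M1 M2 →
      N.Fires M2 h M2' → RRel N M0 L H M1 M2'
  | low {M1 M2 M1' M2' : P → ℕ} {l : Tr} : l ∈ L → RRel N M0 L H M1 M2 →
      (N.restrict H).Fires M1 l M1' → N.Fires M2 l M2' → RRel N M0 L H M1' M2'

/-- The property `P(h,l)`: for all `w ∈ (L ∪ H)*` and `s ∈ L*`, if `M0[w⟩M1`,
`M1[h⟩M2`, `M1[s⟩M3` and `M2[s⟩M4`, then `M3[l⟩` iff `M4[l⟩`. -/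
def PropP (N : PTNet P Tr) (M0 : P → ℕ) (L H : Finset Tr) (h l : Tr) : Prop :=
  ∀ (w s : List Tr) (M1 M2 M3 M4 : P → ℕ),
    (∀ t ∈ w, t ∈ L ∪ H) → (∀ t ∈ s, t ∈ L) →
    N.FiresSeq M0 w M1 → N.Fires M1 h M2 →
    N.FiresSeq M1 s M3 → N.FiresSeq M2 s M4 →
    (N.Enabled M3 l ↔ N.Enabled M4 l)

/-- Intransitive Non-Interference for a three-level net system:
`(N \ D, M)` has NDC (w.r.t. low `L`, high `H`) for `M = M0` and for every
marking `M` with `M0[υd⟩M` in `N`, `d ∈ D`. -/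
def INI (N : PTNet P Tr) (M0 : P → ℕ) (L D H : Finset Tr) : Prop :=
  NDC (N.restrict D) M0 L H ∧
  ∀ (υ : List Tr) (d : Tr) (M : P → ℕ), d ∈ D → N.FiresSeq M0 (υ ++ [d]) M →
    NDC (N.restrict D) M L H

/-- Bisimulation-based Intransitive Non-Interference: as `INI` with `BNDC`. -/
def BINI (N : PTNet P Tr) (M0 : P → ℕ) (L D H : Finset Tr) : Prop :=
  BNDC (N.restrict D) M0 L H ∧
  ∀ (υ : List Tr) (d : Tr) (M : P → ℕ), d ∈ D → N.FiresSeq M0 (υ ++ [d]) M →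
    BNDC (N.restrict D) M L H

/-- The property `Q(h,l)`: for all `χ ∈ T*` and `s ∈ L*`, if `M0[χ⟩M1`,
`M1[h⟩M2`, `M1[s⟩M3` and `M2[s⟩M4`, then `M3[l⟩` iff `M4[l⟩`. -/
def PropQ (N : PTNet P Tr) (M0 : P → ℕ) (L : Finset Tr) (h l : Tr) : Prop :=
  ∀ (χ s : List Tr) (M1 M2 M3 M4 : P → ℕ),
    (∀ t ∈ χ, t ∈ N.transitions) → (∀ t ∈ s, t ∈ L) →
    N.FiresSeq M0 χ M1 → N.Fires M1 h M2 →
    N.FiresSeq M1 s M3 → N.FiresSeq M2 s M4 →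
    (N.Enabled M3 l ↔ N.Enabled M4 l)

end Security

/-! Both `BNDC` and the family of all `P(h,l)` say that erasing the high transitions from a run
leaves a run whose final marking enables the same low transitions as the original one.
From `P(h,l)` this follows by deleting the high transitions of a run one at a time, starting
from the last. From `BNDC` it follows by composing with an attacker that has a single place
holding one token per high transition of the run: the composition can replay the run and then
fire nothing but low transitions, so the bisimulation has to answer it with the low projection,
with exactly the same low transitions enabled at the end. Conversely, relating every run of the
composition to the low projection of its trace in `N` is a weak bisimulation.

`BINI` is `BNDC` of `N \ D` from `M0` and from every marking reached right after a downgrading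
transition. Splitting a run at its last downgrading transition turns `P(h,l)` for all these
initial markings into `Q(h,l)`. -/

namespace LTS

variable {Q A : Type*}

def Stable (S : LTS Q A) (Obs : Set A) (q : Q) : Prop :=
  ∀ τ ∉ Obs, ∀ q', ¬ S.tr q τ q'

theorem Stable.eq_of_tauStar {S : LTS Q A} {Obs : Set A} {q q' : Q} (hq : S.Stable Obs q)
    (h : S.TauStar Obs q q') : q = q' := by
  rcases Relation.ReflTransGen.cases_head h with hqq' | ⟨q'', ⟨τ, hτ, hstep⟩, -⟩
  · exact hqq'
  · exact absurd hstep (hq τ hτ q'')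

end LTS

namespace IsWeakSimulation

variable {Q Q' A : Type*} {Obs : Set A} {S : LTS Q A} {S' : LTS Q' A} {R : Q → Q' → Prop}
  {q p : Q} {q' : Q'} {σ : A}

theorem exists_tr_of_stable (hR : IsWeakSimulation Obs S S' R) (hq : R q q')
    (hq' : S'.Stable Obs q') (hσ : σ ∈ Obs) (h : S.tr q σ p) : ∃ p', S'.tr q' σ p' := by
  obtain ⟨q1, q2, -, hq1, hstep, -, -⟩ := (hR.2 q q' hq).1 σ hσ p h
  obtain rfl := hq'.eq_of_tauStar hq1
  exact ⟨q2, hstep⟩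

theorem obs_step_of_forall_stable (hR : IsWeakSimulation Obs S S' R)
    (hS' : ∀ q', S'.Stable Obs q') (hq : R q q') (hσ : σ ∈ Obs) (h : S.tr q σ p) :
    ∃ p', S'.tr q' σ p' ∧ R p p' := by
  obtain ⟨q1, q2, q3, hq1, hstep, hq3, hR'⟩ := (hR.2 q q' hq).1 σ hσ p h
  obtain rfl := (hS' q').eq_of_tauStar hq1
  obtain rfl := (hS' q2).eq_of_tauStar hq3
  exact ⟨q2, hstep, hR'⟩

theorem rel_of_tau_of_forall_stable (hR : IsWeakSimulation Obs S S' R)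
    (hS' : ∀ q', S'.Stable Obs q') (hq : R q q') (hσ : σ ∉ Obs) (h : S.tr q σ p) : R p q' := by
  obtain ⟨q1, hq1, hR'⟩ := (hR.2 q q' hq).2 σ hσ p h
  rwa [← (hS' q').eq_of_tauStar hq1] at hR'

end IsWeakSimulation

theorem IsWeakBisimulation.exists_tr_iff_of_stable {Q Q' A : Type*} {Obs : Set A}
    {S : LTS Q A} {S' : LTS Q' A} {R : Q → Q' → Prop} {q : Q} {q' : Q'} {σ : A}
    (hR : IsWeakBisimulation Obs S S' R) (hq : R q q') (hqs : S.Stable Obs q)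
    (hq's : S'.Stable Obs q') (hσ : σ ∈ Obs) : (∃ p, S.tr q σ p) ↔ ∃ p', S'.tr q' σ p' :=
  ⟨fun ⟨_, h⟩ => hR.1.exists_tr_of_stable hq hq's hσ h,
    fun ⟨_, h⟩ => hR.2.exists_tr_of_stable hq hqs hσ h⟩

namespace PTNet

section Firing

variable {P Tr : Type*} [DecidableEq P] {N : PTNet P Tr} {M M' M'' M0 : P → ℕ} {t : Tr}
  {s s' : List Tr}

theorem enabled_iff_exists_fires : N.Enabled M t ↔ ∃ M', N.Fires M t M' :=
  ⟨fun h => ⟨_, h, rfl⟩, fun ⟨_, h, _⟩ => h⟩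

theorem Fires.eq (h : N.Fires M t M') (h' : N.Fires M t M'') : M' = M'' :=
  h.2.trans h'.2.symm

theorem fire_of_notMem (ht : t ∉ N.transitions) : N.fire M t = M := by
  funext p
  simp [fire, N.pre_eq_zero t ht, N.post_eq_zero t ht]

@[simp] theorem firesSeq_nil : N.FiresSeq M [] M' ↔ M' = M := Iff.rfl

@[simp] theorem firesSeq_cons :
    N.FiresSeq M (t :: s) M' ↔ ∃ M'', N.Fires M t M'' ∧ N.FiresSeq M'' s M' := Iff.rfl

theorem firesSeq_append :
    N.FiresSeq M (s ++ s') M' ↔ ∃ M'', N.FiresSeq M s M'' ∧ N.FiresSeq M'' s' M' := by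
  induction s generalizing M with
  | nil => simp
  | cons t s ih =>
    simp only [List.cons_append, firesSeq_cons, ih]
    constructor
    · rintro ⟨M₁, ht, M₂, hs, hs'⟩
      exact ⟨M₂, ⟨M₁, ht, hs⟩, hs'⟩
    · rintro ⟨M₂, ⟨M₁, ht, hs⟩, hs'⟩
      exact ⟨M₁, ht, M₂, hs, hs'⟩

theorem firesSeq_concat :
    N.FiresSeq M (s ++ [t]) M' ↔ ∃ M'', N.FiresSeq M s M'' ∧ N.Fires M'' t M' := by
  simp [firesSeq_append]

theorem FiresSeq.eq (h : N.FiresSeq M s M') (h' : N.FiresSeq M s M'') : M' = M'' := by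
  induction s generalizing M with
  | nil => exact h.trans h'.symm
  | cons t s ih =>
    obtain ⟨_, ht, hs⟩ := h
    obtain ⟨_, ht', hs'⟩ := h'
    exact ih hs ((ht'.eq ht) ▸ hs')

theorem FiresSeq.mem_transitions (h : N.FiresSeq M s M') : ∀ t ∈ s, t ∈ N.transitions := by
  induction s generalizing M with
  | nil => simp
  | cons t s ih =>
    obtain ⟨_, ht, hs⟩ := h
    simpa [ht.1.1] using ih hs

end Firing

theorem restrict_enabled_iff {P Tr : Type*} [DecidableEq Tr] {N : PTNet P Tr} {T' : Finset Tr}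
    {M : P → ℕ} {t : Tr} : (N.restrict T').Enabled M t ↔ t ∉ T' ∧ N.Enabled M t := by
  by_cases ht : t ∈ N.transitions \ T'
  · simp_all [Enabled, restrict]
  · simp_all [Enabled, restrict]
    tauto

section Restriction

variable {P Tr : Type*} [DecidableEq P] [DecidableEq Tr] {N : PTNet P Tr}
  {M M' : P → ℕ} {t : Tr} {s : List Tr} {T' : Finset Tr}

theorem restrict_fires_iff : (N.restrict T').Fires M t M' ↔ t ∉ T' ∧ N.Fires M t M' := by
  simp only [Fires, restrict_enabled_iff, and_assoc, and_congr_right_iff]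
  intro ht hen
  have hfire : (N.restrict T').fire M t = N.fire M t := by
    funext p
    simp [fire, restrict, ht, hen.1]
  rw [hfire]

theorem restrict_firesSeq_iff :
    (N.restrict T').FiresSeq M s M' ↔ (∀ t ∈ s, t ∉ T') ∧ N.FiresSeq M s M' := by
  induction s generalizing M with
  | nil => simp
  | cons t s ih => simp [restrict_fires_iff, ih]; tauto

theorem comp_enabled_combine {N' : PTNet P Tr} {M1 M2 : P → ℕ}
    (hd : Disjoint N.places N'.places) :
    (N.comp N').Enabled (N.combine M1 M2) t ↔ t ∈ N.transitions ∪ N'.transitions ∧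
      (∀ p ∈ N.places, N.pre t p ≤ M1 p) ∧ ∀ p ∈ N'.places, N'.pre t p ≤ M2 p := by
  have hd' : ∀ p ∈ N'.places, p ∉ N.places := fun p hp => Finset.disjoint_right.1 hd hp
  simp only [Enabled, comp, combine, Finset.mem_union]
  refine and_congr_right fun _ => ⟨fun h => ⟨fun p hp => ?_, fun p hp => ?_⟩, ?_⟩
  · simpa [hp] using h p (Or.inl hp)
  · simpa [hd' p hp] using h p (Or.inr hp)
  · rintro ⟨h1, h2⟩ p (hp | hp)
    · simpa [hp] using h1 p hp
    · simpa [hd' p hp] using h2 p hp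

theorem comp_fire_combine {N' : PTNet P Tr} {M1 M2 : P → ℕ} :
    (N.comp N').fire (N.combine M1 M2) t = N.combine (N.fire M1 t) (N'.fire M2 t) := by
  funext p
  by_cases hp : p ∈ N.places <;> simp [fire, comp, combine, hp]

end Restriction

variable {P Tr : Type*} [DecidableEq P] [DecidableEq Tr] {N N' : PTNet P Tr} {M0 : P → ℕ}
  {L H : Finset Tr}

def LowProjectionFaithful (N : PTNet P Tr) (M0 : P → ℕ) (L : Finset Tr) : Prop :=
  ∀ α M, N.FiresSeq M0 α M → ∃ Y, N.FiresSeq M0 (α.filter (· ∈ L)) Y ∧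
    ∀ l ∈ L, (N.Enabled Y l ↔ N.Enabled M l)

theorem LowProjectionFaithful.enabled_iff (hF : N.LowProjectionFaithful M0 L)
    {α : List Tr} {M Y : P → ℕ} (hα : N.FiresSeq M0 α M)
    (hY : N.FiresSeq M0 (α.filter (· ∈ L)) Y) {l : Tr} (hl : l ∈ L) :
    N.Enabled Y l ↔ N.Enabled M l := by
  obtain ⟨Y', hY', hiff⟩ := hF α M hα
  rw [hY.eq hY']
  exact hiff l hl

theorem LowProjectionFaithful.propP (hF : N.LowProjectionFaithful M0 L) {h l : Tr}
    (hhL : h ∉ L) (hl : l ∈ L) : PropP N M0 L H h l := by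
  intro w s M1 M2 M3 M4 _ _ hw hh hs3 hs4
  have h3 : N.FiresSeq M0 (w ++ s) M3 := firesSeq_append.2 ⟨M1, hw, hs3⟩
  have h4 : N.FiresSeq M0 (w ++ h :: s) M4 := firesSeq_append.2 ⟨M1, hw, M2, hh, hs4⟩
  have hproj : (w ++ h :: s).filter (· ∈ L) = (w ++ s).filter (· ∈ L) := by simp [hhL]
  obtain ⟨Y, hY, -⟩ := hF _ _ h3
  exact (hF.enabled_iff h3 hY hl).symm.trans (hF.enabled_iff h4 (hproj ▸ hY) hl)

theorem exists_firesSeq_of_propP {h : Tr} (hP : ∀ l ∈ L, PropP N M0 L H h l) {w s : List Tr}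
    {A B M4 : P → ℕ} (hw : ∀ t ∈ w, t ∈ L ∪ H) (hA : N.FiresSeq M0 w A) (hAB : N.Fires A h B)
    (hs : ∀ t ∈ s, t ∈ L) (hB : N.FiresSeq B s M4) : ∃ M3, N.FiresSeq A s M3 := by
  induction s using List.reverseRecOn generalizing M4 with
  | nil => exact ⟨A, rfl⟩
  | append_singleton s l ih =>
    obtain ⟨M4', hB', hl⟩ := firesSeq_concat.1 hB
    have hsL : ∀ t ∈ s, t ∈ L := fun t ht => hs t (by simp [ht])
    obtain ⟨M3', hA'⟩ := ih hsL hB'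
    have hen := (hP l (hs l (by simp)) w s A B M3' M4' hw hsL hA hAB hA' hB').2 hl.1
    exact ⟨_, firesSeq_concat.2 ⟨M3', hA', hen, rfl⟩⟩

theorem lowProjectionFaithful_of_propP (hT : N.transitions ⊆ L ∪ H)
    (hP : ∀ h ∈ H, ∀ l ∈ L, PropP N M0 L H h l) : N.LowProjectionFaithful M0 L := by
  suffices key : ∀ α s M, (∀ t ∈ s, t ∈ L) → N.FiresSeq M0 (α ++ s) M →
      ∃ Y, N.FiresSeq M0 (α.filter (· ∈ L) ++ s) Y ∧ ∀ l ∈ L, (N.Enabled Y l ↔ N.Enabled M l) by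
    intro α M hα
    simpa using key α [] M (by simp) (by simpa using hα)
  intro α
  induction α using List.reverseRecOn with
  | nil => exact fun s M _ hs => ⟨M, by simpa using hs, fun _ _ => Iff.rfl⟩
  | append_singleton α t ih =>
    intro s M hs hrun
    by_cases htL : t ∈ L
    · simpa [htL] using ih (t :: s) M (by simpa [htL] using hs) (by simpa using hrun)
    obtain ⟨A, hA, B, hAB, hB⟩ : ∃ A, N.FiresSeq M0 α A ∧ ∃ B, N.Fires A t B ∧
        N.FiresSeq B s M := by
      simpa [firesSeq_append] using hrun
    have htH : t ∈ H := (Finset.mem_union.1 (hT hAB.1.1)).resolve_left htL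
    have hα : ∀ u ∈ α, u ∈ L ∪ H := fun u hu => hT (hA.mem_transitions u hu)
    obtain ⟨M3, hA3⟩ := exists_firesSeq_of_propP (hP t htH) hα hA hAB hs hB
    obtain ⟨Y, hY, hiff⟩ := ih s M3 hs (firesSeq_append.2 ⟨A, hA, hA3⟩)
    refine ⟨Y, by simpa [htL] using hY, fun l hl => (hiff l hl).trans ?_⟩
    exact hP t htH l hl α s A B M3 M hα hs hA hAB hA3 hB

theorem restrict_toLTS_stable (hT : N.transitions ⊆ L ∪ H) (M0 M : P → ℕ) :
    ((N.restrict H).toLTS M0).Stable L M := by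
  intro τ hτ M' hstep
  obtain ⟨hτH, hτN⟩ := restrict_fires_iff.1 hstep
  exact hτ ((Finset.mem_union.1 (hT hτN.1.1)).resolve_right hτH)

theorem exists_firesSeq_filter_of_isWeakSimulation {C : PTNet P Tr} {MC : P → ℕ}
    {R : (P → ℕ) → (P → ℕ) → Prop}
    (hR : IsWeakSimulation (L : Set Tr) (C.toLTS MC) (N.toLTS M0) R)
    (hN : ∀ M, (N.toLTS M0).Stable L M) {ρ : List Tr} {MM MM' X : P → ℕ}
    (hρ : C.FiresSeq MM ρ MM') (hX : R MM X) :
    ∃ Y, N.FiresSeq X (ρ.filter (· ∈ L)) Y ∧ R MM' Y := by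
  induction ρ generalizing MM X with
  | nil => exact ⟨X, rfl, hρ ▸ hX⟩
  | cons t ρ ih =>
    obtain ⟨MM₁, ht, hρ⟩ := hρ
    by_cases htL : t ∈ L
    · obtain ⟨X₁, hX₁, hR₁⟩ := hR.obs_step_of_forall_stable hN hX htL ht
      obtain ⟨Y, hY, hRY⟩ := ih hρ hR₁
      exact ⟨Y, by simpa [htL] using ⟨X₁, hX₁, hY⟩, hRY⟩
    · simpa [htL] using ih hρ (hR.rel_of_tau_of_forall_stable hN hX htL ht)

def budget (q : P) (S : Finset Tr) : PTNet P Tr where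
  places := {q}
  transitions := S
  pre t _ := if t ∈ S then 1 else 0
  post _ _ := 0
  pre_eq_zero _ ht _ := if_neg ht
  post_eq_zero _ _ _ := rfl

section Budget

variable {q : P} {S : Finset Tr} {t : Tr} {M M' : P → ℕ} {c : ℕ}

theorem comp_budget_enabled_iff (hq : q ∉ N.places) :
    (N.comp (budget q S)).Enabled (N.combine M (Pi.single q c)) t ↔
      t ∈ N.transitions ∪ S ∧ (∀ p ∈ N.places, N.pre t p ≤ M p) ∧ (t ∈ S → c ≠ 0) := by
  rw [comp_enabled_combine (Finset.disjoint_singleton_right.2 hq)]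
  by_cases htS : t ∈ S <;> simp [budget, htS, Nat.one_le_iff_ne_zero]

theorem comp_budget_fires (hq : q ∉ N.places) (ht : N.Fires M t M') :
    (N.comp (budget q S)).Fires (N.combine M (Pi.single q (c + if t ∈ S then 1 else 0))) t
      (N.combine M' (Pi.single q c)) := by
  refine ⟨(comp_budget_enabled_iff hq).2
    ⟨Finset.mem_union_left _ ht.1.1, ht.1.2, fun htS => by simp [htS]⟩, ?_⟩
  rw [comp_fire_combine, ht.2]
  congr 1
  funext p
  by_cases hp : p = q
  · subst hp; by_cases htS : t ∈ S <;> simp [fire, budget, htS]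
  · simp [fire, budget, hp]

theorem comp_budget_firesSeq (hq : q ∉ N.places) {α : List Tr} (hα : N.FiresSeq M α M') :
    (N.comp (budget q S)).FiresSeq (N.combine M (Pi.single q (c + α.countP (· ∈ S)))) α
      (N.combine M' (Pi.single q c)) := by
  induction α generalizing M with
  | nil => subst hα; simp
  | cons t α ih =>
    obtain ⟨M₁, ht, hα⟩ := hα
    refine ⟨_, ?_, ih hα⟩
    convert comp_budget_fires (c := c + α.countP (· ∈ S)) hq ht using 3
    by_cases htS : t ∈ S <;> simp [htS, add_assoc]

end Budget

theorem lowProjectionFaithful_of_bndc [Infinite P] (hT : N.transitions ⊆ L ∪ H)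
    (hLH : Disjoint L H) (hB : BNDC N M0 L H) : N.LowProjectionFaithful M0 L := by
  intro α M hα
  obtain ⟨q, hq⟩ := Infinite.exists_notMem_finset N.places
  obtain ⟨R, hR⟩ := hB (budget q H) (Pi.single q (α.countP (· ∈ H)))
    (Finset.disjoint_singleton_right.2 hq) hLH.symm
  set C := (N.comp (budget q H)).restrict (H \ (budget q H).transitions) with hCdef
  have hC : C.FiresSeq (N.combine M0 (Pi.single q (α.countP (· ∈ H)))) α
      (N.combine M (Pi.single q 0)) :=
    restrict_firesSeq_iff.2 ⟨by simp [budget], by simpa using comp_budget_firesSeq (c := 0) hq hα⟩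
  have hN := restrict_toLTS_stable hT M0
  obtain ⟨Y, hY, hRY⟩ := exists_firesSeq_filter_of_isWeakSimulation hR.2 hN hC hR.1.1
  -- With the budget exhausted, the composition can only fire low transitions.
  have hCstable : (C.toLTS (N.combine M0 (Pi.single q (α.countP (· ∈ H))))).Stable L
      (N.combine M (Pi.single q 0)) := by
    intro τ hτ MM hstep
    obtain ⟨-, hτC⟩ := restrict_fires_iff.1 hstep
    obtain ⟨hτT, -, hτempty⟩ := (comp_budget_enabled_iff hq).1 hτC.1
    have hτH : τ ∉ H := fun h => hτempty h rfl
    have hτN : τ ∈ N.transitions := (Finset.mem_union.1 hτT).resolve_right hτH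
    exact hτ ((Finset.mem_union.1 (hT hτN)).resolve_right hτH)
  refine ⟨Y, (restrict_firesSeq_iff.1 hY).2, fun l hl => ?_⟩
  have hlH : l ∉ H := Finset.disjoint_left.1 hLH hl
  have hlC : C.Enabled (N.combine M (Pi.single q 0)) l ↔ N.Enabled M l := by
    rw [hCdef, restrict_enabled_iff, comp_budget_enabled_iff hq]
    simp [Enabled, budget, hlH]
  rw [← hlC, ← (restrict_enabled_iff (T' := H)).trans (and_iff_right hlH),
    enabled_iff_exists_fires, enabled_iff_exists_fires]
  exact hR.exists_tr_iff_of_stable hRY (hN Y) hCstable hl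

/-- `MM = N.combine M2 M'` says that `MM` agrees with `M2` on the places of `N`. -/
def ProjectionRel (N : PTNet P Tr) (M0 : P → ℕ) (L : Finset Tr) (M1 MM : P → ℕ) : Prop :=
  ∃ α M2 M', N.FiresSeq M0 α M2 ∧ N.FiresSeq M0 (α.filter (· ∈ L)) M1 ∧ MM = N.combine M2 M'

section Bisimulation

variable {M1 MM : P → ℕ} {t : Tr}

theorem ProjectionRel.exists_comp_fires (hT : N.transitions ⊆ L ∪ H)
    (hP : Disjoint N.places N'.places) (hTL : Disjoint N'.transitions L)
    (hF : N.LowProjectionFaithful M0 L) (hR : N.ProjectionRel M0 L M1 MM) {M1' : P → ℕ}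
    (ht : (N.restrict H).Fires M1 t M1') :
    t ∈ L ∧ ∃ MM', ((N.comp N').restrict (H \ N'.transitions)).Fires MM t MM' ∧
      N.ProjectionRel M0 L M1' MM' := by
  obtain ⟨α, M2, M', hα, hα₁, rfl⟩ := hR
  obtain ⟨htH, ht⟩ := restrict_fires_iff.1 ht
  have htL : t ∈ L := (Finset.mem_union.1 (hT ht.1.1)).resolve_right htH
  have htN' : t ∉ N'.transitions := fun h => Finset.disjoint_left.1 hTL h htL
  have hen : N.Enabled M2 t := (hF.enabled_iff hα hα₁ htL).1 ht.1
  refine ⟨htL, _, restrict_fires_iff.2 ⟨fun h => htH (Finset.mem_sdiff.1 h).1, ?_, rfl⟩, ?_⟩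
  · refine (comp_enabled_combine hP).2 ⟨Finset.mem_union_left _ hen.1, hen.2, fun p _ => ?_⟩
    simp [N'.pre_eq_zero t htN']
  · refine ⟨α ++ [t], N.fire M2 t, N'.fire M' t, firesSeq_concat.2 ⟨M2, hα, hen, rfl⟩, ?_,
      comp_fire_combine⟩
    simpa [htL] using firesSeq_concat.2 ⟨M1, hα₁, ht⟩

theorem ProjectionRel.of_comp_fires (hLH : Disjoint L H)
    (hP : Disjoint N.places N'.places) (hTL : Disjoint N'.transitions L)
    (hF : N.LowProjectionFaithful M0 L) (hR : N.ProjectionRel M0 L M1 MM) {MM' : P → ℕ}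
    (ht : ((N.comp N').restrict (H \ N'.transitions)).Fires MM t MM') :
    (t ∈ L → ∃ M1', (N.restrict H).Fires M1 t M1' ∧ N.ProjectionRel M0 L M1' MM') ∧
      (t ∉ L → N.ProjectionRel M0 L M1 MM') := by
  obtain ⟨α, M2, M', hα, hα₁, rfl⟩ := hR
  obtain ⟨htH, hen, rfl⟩ := restrict_fires_iff.1 ht
  obtain ⟨htT, hpre, -⟩ := (comp_enabled_combine hP).1 hen
  by_cases htN : t ∈ N.transitions
  · have hα' : N.FiresSeq M0 (α ++ [t]) (N.fire M2 t) :=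
      firesSeq_concat.2 ⟨M2, hα, ⟨htN, hpre⟩, rfl⟩
    refine ⟨fun htL => ?_, fun htL => ⟨α ++ [t], _, _, hα', by simpa [htL] using hα₁,
      comp_fire_combine⟩⟩
    have hen₁ : N.Enabled M1 t := (hF.enabled_iff hα hα₁ htL).2 ⟨htN, hpre⟩
    refine ⟨_, restrict_fires_iff.2 ⟨Finset.disjoint_left.1 hLH htL, hen₁, rfl⟩, α ++ [t], _, _,
      hα', ?_, comp_fire_combine⟩
    simpa [htL] using firesSeq_concat.2 ⟨M1, hα₁, hen₁, rfl⟩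
  · have htL : t ∉ L := fun h => htN ((Finset.mem_union.1 htT).resolve_right
      (Finset.disjoint_right.1 hTL h))
    refine ⟨fun h => absurd h htL, fun _ => ⟨α, M2, N'.fire M' t, hα, hα₁, ?_⟩⟩
    rw [comp_fire_combine, fire_of_notMem htN]

end Bisimulation

theorem bndc_of_lowProjectionFaithful (hT : N.transitions ⊆ L ∪ H) (hLH : Disjoint L H)
    (hF : N.LowProjectionFaithful M0 L) : BNDC N M0 L H := by
  intro N' M0' hP hTL
  have hinit : N.ProjectionRel M0 L M0 (N.combine M0 M0') := ⟨[], M0, M0', rfl, rfl, rfl⟩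
  refine ⟨N.ProjectionRel M0 L, ⟨hinit, fun M1 MM hR => ⟨?_, ?_⟩⟩,
    ⟨hinit, fun MM M1 hR => ⟨?_, ?_⟩⟩⟩
  · intro l _ M1' hl
    obtain ⟨-, MM', hMM', hR'⟩ := hR.exists_comp_fires hT hP hTL hF hl
    exact ⟨MM, MM', MM', .refl, hMM', .refl, hR'⟩
  · intro τ hτ M1' hτ'
    exact absurd hτ' (restrict_toLTS_stable hT M0 M1 τ hτ M1')
  · intro l hl MM' hl'
    obtain ⟨M1', hM1', hR'⟩ := (hR.of_comp_fires hLH hP hTL hF hl').1 hl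
    exact ⟨M1, M1', M1', .refl, hM1', .refl, hR'⟩
  · intro τ hτ MM' hτ'
    exact ⟨M1, .refl, (hR.of_comp_fires hLH hP hTL hF hτ').2 hτ⟩

theorem bndc_iff_propP [Infinite P] (hT : N.transitions ⊆ L ∪ H) (hLH : Disjoint L H) :
    BNDC N M0 L H ↔ ∀ h ∈ H, ∀ l ∈ L, PropP N M0 L H h l :=
  ⟨fun hB _ hh _ hl =>
      (lowProjectionFaithful_of_bndc hT hLH hB).propP (Finset.disjoint_right.1 hLH hh) hl,
    fun hP => bndc_of_lowProjectionFaithful hT hLH (lowProjectionFaithful_of_propP hT hP)⟩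


section Downgrading

variable {D : Finset Tr} {h l : Tr}

theorem firesSeq_restrict_or_downgrade {χ : List Tr} {M1 : P → ℕ} (hχ : N.FiresSeq M0 χ M1) :
    (N.restrict D).FiresSeq M0 χ M1 ∨
      ∃ υ d w M, d ∈ D ∧ N.FiresSeq M0 (υ ++ [d]) M ∧ (N.restrict D).FiresSeq M w M1 := by
  induction χ using List.reverseRecOn generalizing M1 with
  | nil => exact Or.inl hχ
  | append_singleton χ t ih =>
    obtain ⟨M', hχ', ht⟩ := firesSeq_concat.1 hχ
    by_cases htD : t ∈ D
    · exact Or.inr ⟨χ, t, [], M1, htD, hχ, rfl⟩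
    have ht' : (N.restrict D).Fires M' t M1 := restrict_fires_iff.2 ⟨htD, ht⟩
    rcases ih hχ' with hχ' | ⟨υ, d, w, M, hd, hM, hw⟩
    · exact Or.inl (firesSeq_concat.2 ⟨M', hχ', ht'⟩)
    · exact Or.inr ⟨υ, d, w ++ [t], M, hd, hM, firesSeq_concat.2 ⟨M', hw, ht'⟩⟩

theorem propP_restrict_of_propQ (hQ : PropQ N M0 L h l) {M : P → ℕ} (hM : N.Reachable M0 M)
    (hlD : l ∉ D) : PropP (N.restrict D) M L H h l := by
  obtain ⟨χ, hχ⟩ := hM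
  intro w s M1 M2 M3 M4 _ hs hw hh hs3 hs4
  have hrun : N.FiresSeq M0 (χ ++ w) M1 :=
    firesSeq_append.2 ⟨M, hχ, (restrict_firesSeq_iff.1 hw).2⟩
  simpa [restrict_enabled_iff, hlD] using hQ (χ ++ w) s M1 M2 M3 M4 hrun.mem_transitions hs hrun
    (restrict_fires_iff.1 hh).2 (restrict_firesSeq_iff.1 hs3).2 (restrict_firesSeq_iff.1 hs4).2

theorem propQ_of_propP_restrict (hT : (N.restrict D).transitions ⊆ L ∪ H) (hLD : Disjoint L D)
    (hhD : h ∉ D) (hlD : l ∉ D) (h0 : PropP (N.restrict D) M0 L H h l)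
    (hd : ∀ υ d M, d ∈ D → N.FiresSeq M0 (υ ++ [d]) M → PropP (N.restrict D) M L H h l) :
    PropQ N M0 L h l := by
  intro χ s M1 M2 M3 M4 _ hs hχ hh hs3 hs4
  suffices key : ∀ M w, PropP (N.restrict D) M L H h l → (N.restrict D).FiresSeq M w M1 →
      (N.Enabled M3 l ↔ N.Enabled M4 l) by
    rcases firesSeq_restrict_or_downgrade hχ with hχ' | ⟨υ, d, w, M, hd', hM, hw⟩
    exacts [key M0 χ h0 hχ', key M w (hd υ d M hd' hM) hw]
  intro M w hP hw
  have hsD : ∀ t ∈ s, t ∉ D := fun t ht => Finset.disjoint_left.1 hLD (hs t ht)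
  simpa [restrict_enabled_iff, hlD] using hP w s M1 M2 M3 M4
    (fun t ht => hT (hw.mem_transitions t ht)) hs hw (restrict_fires_iff.2 ⟨hhD, hh⟩)
    (restrict_firesSeq_iff.2 ⟨hsD, hs3⟩) (restrict_firesSeq_iff.2 ⟨hsD, hs4⟩)

end Downgrading

end PTNet

/-- a three-level net system has BINI iff `Q(h,l)` holds for
every `h ∈ H` and every `l ∈ L`. -/
theorem bini_iff_propQ
    {P Tr : Type _} [DecidableEq P] [DecidableEq Tr] [Infinite P]
    (N : PTNet P Tr) (M0 : P → ℕ) (L D H : Finset Tr)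
    (hT : N.transitions = L ∪ D ∪ H)
    (hLD : Disjoint L D) (hLH : Disjoint L H) (hDH : Disjoint D H) :
    BINI N M0 L D H ↔ ∀ h ∈ H, ∀ l ∈ L, PropQ N M0 L h l := by
  have hT' : (N.restrict D).transitions ⊆ L ∪ H := by
    intro t ht
    obtain ⟨ht, htD⟩ := Finset.mem_sdiff.1 ht
    simp only [hT, Finset.mem_union] at ht ⊢
    tauto
  have hB (M : P → ℕ) := PTNet.bndc_iff_propP (N := N.restrict D) (M0 := M) hT' hLH
  have hhD : ∀ h ∈ H, h ∉ D := fun _ hh => Finset.disjoint_right.1 hDH hh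
  have hlD : ∀ l ∈ L, l ∉ D := fun _ hl => Finset.disjoint_left.1 hLD hl
  constructor
  · rintro ⟨h0, hd⟩ h hh l hl
    exact PTNet.propQ_of_propP_restrict hT' hLD (hhD h hh) (hlD l hl) ((hB M0).1 h0 h hh l hl)
      fun υ d M hd' hM => (hB M).1 (hd υ d M hd' hM) h hh l hl
  · intro hQ
    refine ⟨(hB M0).2 fun h hh l hl => ?_, fun υ d M _ hM => (hB M).2 fun h hh l hl => ?_⟩
    · exact PTNet.propP_restrict_of_propQ (hQ h hh l hl) ⟨[], rfl⟩ (hlD l hl)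
    · exact PTNet.propP_restrict_of_propQ (hQ h hh l hl) ⟨_, hM⟩ (hlD l hl)
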